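/- arXiv:1711.01807 — 3 statements merged into one kernel-verified Lean document; each statement's English description precedes it below -/
import Mathlib

section
/- Let $g_1, h_1, g_2, h_2 \in \mathrm{SU}(2)$ with $[g_1,h_1][g_2,h_2] = I$, where $[a,b] = aba^{-1}b^{-1}$. Let $X = h_2h_1 - (h_2h_1)^{-1}$, $Y = h_1h_2 - (h_1h_2)^{-1}$. Then for all real $t$: $[e^{tX}g_1, h_1][e^{tY}g_2, h_2] = I$. -/
open Matrix Complex

abbrev M2 := Matrix (Fin 2) (Fin 2) ℂ

abbrev SU2 : Submonoid M2 := Matrix.specialUnitaryGroup (Fin 2) ℂ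

/-!
Conjugation by `h₁` carries `X` to `Y` and conjugation by `h₂` carries `Y` to `X`, so
`e^{tY} h₁ = h₁ e^{tX}` and `e^{tX} h₂ = h₂ e^{tY}`. With these, the twisted product
`[e^{tX} g₁, h₁][e^{tY} g₂, h₂]` rearranges to `e^{tX} [g₁, h₁][g₂, h₂] e^{-tX} = 1`.
-/

theorem mul_mul_eq_one_of_twisted_commute {M : Type*} [Monoid M] {e e' f f' x u y v : M}
    (hrel : x * u * (y * v) = 1) (he : e * e' = 1) (hf : f' * f = 1)
    (hu : e' * u = u * f') (hv : f' * v = v * e') :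
    e * x * (e' * u) * (f * y * (f' * v)) = 1 :=
  calc e * x * (e' * u) * (f * y * (f' * v))
      = e * x * (u * f') * (f * y * (v * e')) := by rw [hu, hv]
    _ = e * (x * u * (f' * f * y * v)) * e' := by simp only [mul_assoc]
    _ = 1 := by rw [hf, one_mul, hrel, mul_one, he]

namespace Matrix

variable {n : Type*} [Fintype n] [DecidableEq n]

theorem conj_mul_sub_inv {R : Type*} [CommRing R] {h : Matrix n n R} (hh : IsUnit h.det)
    (k : Matrix n n R) : h * (k * h - (k * h)⁻¹) * h⁻¹ = h * k - (h * k)⁻¹ := by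
  simp only [mul_sub, sub_mul, mul_inv_rev, mul_assoc, mul_nonsing_inv _ hh, mul_one,
    mul_nonsing_inv_cancel_left _ _ hh]

theorem exp_mul_eq_mul_exp_of_conj {𝔸 : Type*} [NormedCommRing 𝔸] [NormedAlgebra ℚ 𝔸]
    [CompleteSpace 𝔸] {h A B : Matrix n n 𝔸} (hh : IsUnit h.det) (hAB : h * A * h⁻¹ = B) :
    NormedSpace.exp B * h = h * NormedSpace.exp A := by
  rw [← hAB, exp_conj _ _ ((isUnit_iff_isUnit_det h).2 hh), nonsing_inv_mul_cancel_right _ _ hh]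

theorem inv_mul_inv_eq_of_mul_eq {R : Type*} [CommRing R] {h A B : Matrix n n R}
    (hAB : A * h = h * B) : B⁻¹ * h⁻¹ = h⁻¹ * A⁻¹ := by
  rw [← mul_inv_rev, ← mul_inv_rev, hAB]

end Matrix

theorem stmt3_general (g1 h1 g2 h2 : M2)
    (hh1 : h1 ∈ SU2) (hh2 : h2 ∈ SU2)
    (hrel : (g1 * h1 * g1⁻¹ * h1⁻¹) * (g2 * h2 * g2⁻¹ * h2⁻¹) = 1)
    (X Y : M2) (hX : X = h2 * h1 - (h2 * h1)⁻¹) (hY : Y = h1 * h2 - (h1 * h2)⁻¹)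
    (t : ℝ) :
    (NormedSpace.exp ((t : ℂ) • X) * g1 * h1 * (NormedSpace.exp ((t : ℂ) • X) * g1)⁻¹ * h1⁻¹) *
      (NormedSpace.exp ((t : ℂ) • Y) * g2 * h2 * (NormedSpace.exp ((t : ℂ) • Y) * g2)⁻¹ * h2⁻¹) = 1 := by
  have det_h1 : IsUnit h1.det := (mem_specialUnitaryGroup_iff.1 hh1).2 ▸ isUnit_one
  have det_h2 : IsUnit h2.det := (mem_specialUnitaryGroup_iff.1 hh2).2 ▸ isUnit_one
  have h1_intertwines : NormedSpace.exp ((t : ℂ) • Y) * h1 = h1 * NormedSpace.exp ((t : ℂ) • X) :=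
    exp_mul_eq_mul_exp_of_conj det_h1 <| by
      rw [Matrix.mul_smul, Matrix.smul_mul, hX, hY, conj_mul_sub_inv det_h1]
  have h2_intertwines : NormedSpace.exp ((t : ℂ) • X) * h2 = h2 * NormedSpace.exp ((t : ℂ) • Y) :=
    exp_mul_eq_mul_exp_of_conj det_h2 <| by
      rw [Matrix.mul_smul, Matrix.smul_mul, hX, hY, conj_mul_sub_inv det_h2]
  have det_exp (A : M2) : IsUnit (NormedSpace.exp A).det :=
    (isUnit_iff_isUnit_det _).1 (isUnit_exp A)
  have key := mul_mul_eq_one_of_twisted_commute (x := g1 * h1 * g1⁻¹) (y := g2 * h2 * g2⁻¹)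
    (by simpa only [mul_assoc] using hrel) (mul_nonsing_inv _ (det_exp _))
    (nonsing_inv_mul _ (det_exp _)) (inv_mul_inv_eq_of_mul_eq h1_intertwines) (inv_mul_inv_eq_of_mul_eq h2_intertwines)
  simpa only [Matrix.mul_inv_rev, mul_assoc] using key

theorem stmt3 (g1 h1 g2 h2 : M2)
    (hg1 : g1 ∈ SU2) (hh1 : h1 ∈ SU2) (hg2 : g2 ∈ SU2) (hh2 : h2 ∈ SU2)
    (hrel : (g1 * h1 * g1⁻¹ * h1⁻¹) * (g2 * h2 * g2⁻¹ * h2⁻¹) = 1)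
    (X Y : M2) (hX : X = h2 * h1 - (h2 * h1)⁻¹) (hY : Y = h1 * h2 - (h1 * h2)⁻¹)
    (t : ℝ) :
    (NormedSpace.exp ((t : ℂ) • X) * g1 * h1 * (NormedSpace.exp ((t : ℂ) • X) * g1)⁻¹ * h1⁻¹) *
      (NormedSpace.exp ((t : ℂ) • Y) * g2 * h2 * (NormedSpace.exp ((t : ℂ) • Y) * g2)⁻¹ * h2⁻¹) = 1 :=
  stmt3_general g1 h1 g2 h2 hh1 hh2 hrel X Y hX hY t
end

section
/- Let $g_1, h_1, g_2, h_2 \in \mathrm{SU}(2)$ with $h_1 = \mathrm{diag}(e^{i\theta_1}, e^{-i\theta_1})$, $h_2 = \mathrm{diag}(e^{i\theta_2}, e^{-i\theta_2})$, and suppose $[g_1,h_1] = [g_2,h_2]^{-1}$. Write $g_j = \begin{pmatrix} w_j & z_j \\ -\bar z_j & \bar w_j\end{pmatrix}$ and $c_j = |w_j|^2$. Then: $(1-c_1)(1-\cos 2\theta_1) = (1-c_2)(1-\cos 2\theta_2)$, $-(1-c_1)\sin 2\theta_1 = (1-c_2)\sin 2\theta_2$, and $c_1(1-c_1)(1-\cos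 2\theta_1) = c_2(1-c_2)(1-\cos 2\theta_2)$. -/
open Matrix Complex

lemma diag2 (a b : ℂ) : Matrix.diagonal ![a,b] = !![a,0;0,b] := by
  ext i j; fin_cases i <;> fin_cases j <;> simp [Matrix.diagonal]

lemma expI (θ : ℝ) : Complex.exp (θ * Complex.I) = (Real.cos θ : ℂ) + (Real.sin θ : ℂ) * Complex.I := by
  rw [Complex.exp_mul_I]; push_cast; ring

lemma expNegI (θ : ℝ) : Complex.exp (-θ * Complex.I) = (Real.cos θ : ℂ) - (Real.sin θ : ℂ) * Complex.I := by
  rw [show (-(θ:ℂ) * Complex.I) = ((-θ : ℝ):ℂ) * Complex.I by push_cast; ring, Complex.exp_mul_I]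
  push_cast
  simp [Complex.cos_neg, Complex.sin_neg]
  ring

lemma quad {M : Type*} [Monoid M] {a b a' b' : M} (ha : a*a'=1) (ha' : a'*a=1) (hb : b*b'=1) (hb' : b'*b=1) :
    (a*b*a'*b')*(b*a*b'*a') = 1 := by
  calc (a*b*a'*b')*(b*a*b'*a') = a*(b*(a'*((b'*b)*(a*(b'*a'))))) := by simp only [mul_assoc]
  _ = 1 := by
    rw [hb', one_mul, ← mul_assoc a' a, ha', one_mul, ← mul_assoc b b', hb, one_mul, ha]

theorem stmt11 (θ₁ θ₂ : ℝ) (w₁ z₁ w₂ z₂ : ℂ)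
    (g1 h1 g2 h2 : M2)
    (hg1 : g1 = !![w₁, z₁; -(starRingEnd ℂ) z₁, (starRingEnd ℂ) w₁])
    (hg2 : g2 = !![w₂, z₂; -(starRingEnd ℂ) z₂, (starRingEnd ℂ) w₂])
    (hn1 : Complex.normSq w₁ + Complex.normSq z₁ = 1)
    (hn2 : Complex.normSq w₂ + Complex.normSq z₂ = 1)
    (hh1 : h1 = Matrix.diagonal ![Complex.exp (θ₁ * Complex.I), Complex.exp (-θ₁ * Complex.I)])
    (hh2 : h2 = Matrix.diagonal ![Complex.exp (θ₂ * Complex.I), Complex.exp (-θ₂ * Complex.I)])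
    (hrel : g1 * h1 * g1⁻¹ * h1⁻¹ = (g2 * h2 * g2⁻¹ * h2⁻¹)⁻¹) :
    (1 - Complex.normSq w₁) * (1 - Real.cos (2 * θ₁))
        = (1 - Complex.normSq w₂) * (1 - Real.cos (2 * θ₂)) ∧
    -((1 - Complex.normSq w₁) * Real.sin (2 * θ₁))
        = (1 - Complex.normSq w₂) * Real.sin (2 * θ₂) ∧
    Complex.normSq w₁ * (1 - Complex.normSq w₁) * (1 - Real.cos (2 * θ₁))
        = Complex.normSq w₂ * (1 - Complex.normSq w₂) * (1 - Real.cos (2 * θ₂)) := by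
  have P1 : Real.cos θ₁ ^ 2 + Real.sin θ₁ ^ 2 = 1 := Real.cos_sq_add_sin_sq θ₁
  have P2 : Real.cos θ₂ ^ 2 + Real.sin θ₂ ^ 2 = 1 := Real.cos_sq_add_sin_sq θ₂
  have P1c : (Real.cos θ₁ : ℂ) ^ 2 + (Real.sin θ₁ : ℂ) ^ 2 = 1 := by exact_mod_cast congrArg (Complex.ofReal) P1
  have P2c : (Real.cos θ₂ : ℂ) ^ 2 + (Real.sin θ₂ : ℂ) ^ 2 = 1 := by exact_mod_cast congrArg (Complex.ofReal) P2
  have hc1 : w₁ * (starRingEnd ℂ) w₁ + z₁ * (starRingEnd ℂ) z₁ = 1 := by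
    rw [Complex.mul_conj, Complex.mul_conj]; norm_cast
  have hc2 : w₂ * (starRingEnd ℂ) w₂ + z₂ * (starRingEnd ℂ) z₂ = 1 := by
    rw [Complex.mul_conj, Complex.mul_conj]; norm_cast
  -- literal forms of h
  have hh1' : h1 = !![(Real.cos θ₁ : ℂ) + Real.sin θ₁ * Complex.I, 0; 0,
      (Real.cos θ₁ : ℂ) - Real.sin θ₁ * Complex.I] := by
    rw [hh1, diag2, expI, expNegI]
  have hh2' : h2 = !![(Real.cos θ₂ : ℂ) + Real.sin θ₂ * Complex.I, 0; 0,
      (Real.cos θ₂ : ℂ) - Real.sin θ₂ * Complex.I] := by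
    rw [hh2, diag2, expI, expNegI]
  -- two-sided inverses
  have hg1r : g1 * !![(starRingEnd ℂ) w₁, -z₁; (starRingEnd ℂ) z₁, w₁] = 1 := by
    rw [hg1]; ext i j; fin_cases i <;> fin_cases j <;>
      simp [Matrix.mul_apply, Fin.sum_univ_two, Matrix.one_apply] <;>
      first | linear_combination hc1 | linear_combination -hc1 | ring1
  have hg2r : g2 * !![(starRingEnd ℂ) w₂, -z₂; (starRingEnd ℂ) z₂, w₂] = 1 := by
    rw [hg2]; ext i j; fin_cases i <;> fin_cases j <;>
      simp [Matrix.mul_apply, Fin.sum_univ_two, Matrix.one_apply] <;>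
      first | linear_combination hc2 | linear_combination -hc2 | ring1
  have hh1r : h1 * !![(Real.cos θ₁ : ℂ) - Real.sin θ₁ * Complex.I, 0; 0,
      (Real.cos θ₁ : ℂ) + Real.sin θ₁ * Complex.I] = 1 := by
    rw [hh1']; ext i j; fin_cases i <;> fin_cases j <;>
      simp [Matrix.mul_apply, Fin.sum_univ_two, Matrix.one_apply,
        ← Complex.ofReal_cos, ← Complex.ofReal_sin] <;>
      first
      | linear_combination P1c - (Real.sin θ₁ : ℂ)^2 * Complex.I_sq
      | linear_combination -P1c + (Real.sin θ₁ : ℂ)^2 * Complex.I_sq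
      | ring1
  have hh2r : h2 * !![(Real.cos θ₂ : ℂ) - Real.sin θ₂ * Complex.I, 0; 0,
      (Real.cos θ₂ : ℂ) + Real.sin θ₂ * Complex.I] = 1 := by
    rw [hh2']; ext i j; fin_cases i <;> fin_cases j <;>
      simp [Matrix.mul_apply, Fin.sum_univ_two, Matrix.one_apply,
        ← Complex.ofReal_cos, ← Complex.ofReal_sin] <;>
      first
      | linear_combination P2c - (Real.sin θ₂ : ℂ)^2 * Complex.I_sq
      | linear_combination -P2c + (Real.sin θ₂ : ℂ)^2 * Complex.I_sq
      | ring1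
  have hg1i := Matrix.inv_eq_right_inv hg1r
  have hg2i := Matrix.inv_eq_right_inv hg2r
  have hh1i := Matrix.inv_eq_right_inv hh1r
  have hh2i := Matrix.inv_eq_right_inv hh2r
  have hg2l := mul_eq_one_comm.mp hg2r
  have hh2l := mul_eq_one_comm.mp hh2r
  rw [hg1i, hh1i, hg2i, hh2i,
      Matrix.inv_eq_right_inv (quad hg2r hg2l hh2r hh2l)] at hrel
  rw [hg1, hg2, hh1', hh2'] at hrel
  have E00 := congrFun (congrFun hrel 0) 0
  have E01 := congrFun (congrFun hrel 0) 1
  simp [Matrix.mul_apply, Fin.sum_univ_two] at E00 E01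
  simp only [← Complex.ofReal_cos, ← Complex.ofReal_sin] at E00 E01
  -- clean complex equations
  have hw1 := Complex.mul_conj w₁
  have hz1 := Complex.mul_conj z₁
  have hw2 := Complex.mul_conj w₂
  have hz2 := Complex.mul_conj z₂
  have key : ((Complex.normSq w₁ * (Real.cos θ₁^2+Real.sin θ₁^2) + Complex.normSq z₁*(Real.cos θ₁^2-Real.sin θ₁^2) : ℝ) : ℂ)
        + ((Complex.normSq z₁ * (-(2*Real.cos θ₁*Real.sin θ₁)) : ℝ) : ℂ) * Complex.I
      = ((Complex.normSq w₂ * (Real.cos θ₂^2+Real.sin θ₂^2) + Complex.normSq z₂*(Real.cos θ₂^2-Real.sin θ₂^2) : ℝ) : ℂ)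
        + ((Complex.normSq z₂ * (2*Real.cos θ₂*Real.sin θ₂) : ℝ) : ℂ) * Complex.I := by
    linear_combination (norm := (push_cast; ring1)) E00
      - ((Real.cos θ₁ : ℂ)^2 + (Real.sin θ₁ : ℂ)^2) * hw1
      - ((Real.cos θ₁ : ℂ)^2 - (Real.sin θ₁ : ℂ)^2 - 2*(Real.cos θ₁ : ℂ)*(Real.sin θ₁ : ℂ)*Complex.I) * hz1
      + (w₁ * (starRingEnd ℂ) w₁ - z₁ * (starRingEnd ℂ) z₁) * (Real.sin θ₁ : ℂ)^2 * Complex.I_sq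
      + ((Real.cos θ₂ : ℂ)^2 + (Real.sin θ₂ : ℂ)^2) * hw2
      + ((Real.cos θ₂ : ℂ)^2 - (Real.sin θ₂ : ℂ)^2 + 2*(Real.cos θ₂ : ℂ)*(Real.sin θ₂ : ℂ)*Complex.I) * hz2
      - (w₂ * (starRingEnd ℂ) w₂ - z₂ * (starRingEnd ℂ) z₂) * (Real.sin θ₂ : ℂ)^2 * Complex.I_sq
  have key01 : w₁ * z₁ * (((2*Real.sin θ₁^2 : ℝ) : ℂ) + ((-(2*Real.sin θ₁*Real.cos θ₁) : ℝ) : ℂ) * Complex.I)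
      = w₂ * z₂ * (((-(2*Real.sin θ₂^2) : ℝ) : ℂ) + ((2*Real.sin θ₂*Real.cos θ₂ : ℝ) : ℂ) * Complex.I) := by
    linear_combination (norm := (push_cast; ring1)) E01
      + 2*w₁*z₁*(Real.sin θ₁ : ℂ)^2 * Complex.I_sq
      + 2*w₂*z₂*(Real.sin θ₂ : ℂ)^2 * Complex.I_sq
  have R := congrArg Complex.re key
  have M := congrArg Complex.im key
  have nsab : ∀ a b : ℝ, Complex.normSq ((a:ℂ) + (b:ℂ)*Complex.I) = a^2+b^2 := by
    intro a b; rw [Complex.normSq_apply]; simp; ring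
  have N := congrArg Complex.normSq key01
  simp only [Complex.normSq_mul, nsab] at N
  simp [-Complex.ofReal_cos, -Complex.ofReal_sin, -Complex.ofReal_pow,
    Complex.add_re, Complex.add_im, Complex.mul_re, Complex.mul_im] at R M
  have e1 : (1:ℝ) - Complex.normSq w₁ = Complex.normSq z₁ := by linarith
  have e2 : (1:ℝ) - Complex.normSq w₂ = Complex.normSq z₂ := by linarith
  refine ⟨?_, ?_, ?_⟩
  · rw [e1, e2, Real.cos_two_mul, Real.cos_two_mul]
    linear_combination -R - (Complex.normSq z₁)*P1 + hn1
      + (Complex.normSq z₂)*P2 - hn2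
  · rw [e1, e2, Real.sin_two_mul, Real.sin_two_mul]
    linear_combination M
  · rw [e1, e2, Real.cos_two_mul, Real.cos_two_mul]
    linear_combination (1/2)*N
      - (Complex.normSq w₁*Complex.normSq z₁)*(2+2*Real.sin θ₁^2)*P1
      + (Complex.normSq w₂*Complex.normSq z₂)*(2+2*Real.sin θ₂^2)*P2
end

section
/- Let $g_1, h_1, g_2, h_2 \in \mathrm{SU}(2)$ with $h_1, h_2$ diagonal, $[g_1,h_1][g_2,h_2] = I$, and suppose the representation is irreducible in the sense that not all of $g_1,h_1,g_2,h_2$ commute pairwise. Then at least one of $h_1$, $h_2$, $h_1h_2$ equals $I$ or $-I$. -/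
open Matrix Complex
lemma su2_form (g : M2) (hg : g ∈ SU2) :
    ∃ a b : ℂ, g = !![a, b; -(starRingEnd ℂ) b, (starRingEnd ℂ) a] ∧
      a * (starRingEnd ℂ) a + b * (starRingEnd ℂ) b = 1 := by
  rw [Matrix.mem_specialUnitaryGroup_iff] at hg
  obtain ⟨hu, hdet⟩ := hg
  rw [Matrix.mem_unitaryGroup_iff] at hu
  have hinv : g⁻¹ = star g := Matrix.inv_eq_right_inv hu
  have hadj : g⁻¹ = g.adjugate := by
    rw [Matrix.inv_def, hdet]; simp
  have key : star g = g.adjugate := hinv ▸ hadj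
  have h00 : (starRingEnd ℂ) (g 0 0) = g 1 1 := by
    have := congrFun (congrFun key 0) 0
    simpa [Matrix.adjugate_fin_two, Matrix.star_apply] using this
  have h01 : (starRingEnd ℂ) (g 1 0) = -g 0 1 := by
    have := congrFun (congrFun key 0) 1
    simpa [Matrix.adjugate_fin_two, Matrix.star_apply] using this
  have h10 : g 1 0 = -(starRingEnd ℂ) (g 0 1) := by
    have := congrArg (starRingEnd ℂ) h01
    simpa using this
  refine ⟨g 0 0, g 0 1, ?_, ?_⟩
  · ext i j
    fin_cases i <;> fin_cases j <;> simp [← h00, h10]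
  · rw [Matrix.det_fin_two, ← h00, h10] at hdet
    linear_combination hdet

theorem stmt12 (g1 h1 g2 h2 : M2)
    (hg1 : g1 ∈ SU2) (hh1 : h1 ∈ SU2) (hg2 : g2 ∈ SU2) (hh2 : h2 ∈ SU2)
    (hd1 : ∃ θ : ℝ, h1 = Matrix.diagonal ![Complex.exp (θ * Complex.I), Complex.exp (-θ * Complex.I)])
    (hd2 : ∃ θ : ℝ, h2 = Matrix.diagonal ![Complex.exp (θ * Complex.I), Complex.exp (-θ * Complex.I)])
    (hrel : (g1 * h1 * g1⁻¹ * h1⁻¹) * (g2 * h2 * g2⁻¹ * h2⁻¹) = 1)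
    (hirr : ¬ (g1 * h1 = h1 * g1 ∧ g1 * g2 = g2 * g1 ∧ g1 * h2 = h2 * g1 ∧
               h1 * g2 = g2 * h1 ∧ h1 * h2 = h2 * h1 ∧ g2 * h2 = h2 * g2)) :
    h1 = 1 ∨ h1 = -1 ∨ h2 = 1 ∨ h2 = -1 ∨ h1 * h2 = 1 ∨ h1 * h2 = -1 := by
  obtain ⟨θ1, hH1⟩ := hd1
  obtain ⟨θ2, hH2⟩ := hd2
  set z1 : ℂ := Complex.exp (θ1 * Complex.I) with hz1def
  set w1 : ℂ := Complex.exp (-θ1 * Complex.I) with hw1def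
  set z2 : ℂ := Complex.exp (θ2 * Complex.I) with hz2def
  set w2 : ℂ := Complex.exp (-θ2 * Complex.I) with hw2def
  have hP1 : z1 * w1 = 1 := by
    rw [hz1def, hw1def, ← Complex.exp_add]
    norm_num
  have hP2 : z2 * w2 = 1 := by
    rw [hz2def, hw2def, ← Complex.exp_add]
    norm_num
  obtain ⟨a1, b1, hG1, hN1⟩ := su2_form g1 hg1
  obtain ⟨a2, b2, hG2, hN2⟩ := su2_form g2 hg2
  have hg1i : g1⁻¹ = !![(starRingEnd ℂ) a1, -b1; (starRingEnd ℂ) b1, a1] := by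
    apply Matrix.inv_eq_right_inv
    rw [hG1]
    ext i j
    fin_cases i <;> fin_cases j <;>
      simp [Matrix.mul_apply, Fin.sum_univ_two, Matrix.one_apply] <;>
      first | linear_combination hN1 | ring
  have hg2i : g2⁻¹ = !![(starRingEnd ℂ) a2, -b2; (starRingEnd ℂ) b2, a2] := by
    apply Matrix.inv_eq_right_inv
    rw [hG2]
    ext i j
    fin_cases i <;> fin_cases j <;>
      simp [Matrix.mul_apply, Fin.sum_univ_two, Matrix.one_apply] <;>
      first | linear_combination hN2 | ring
  have hh1i : h1⁻¹ = Matrix.diagonal ![w1, z1] := by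
    apply Matrix.inv_eq_right_inv
    rw [hH1, Matrix.diagonal_mul_diagonal]
    ext i j
    fin_cases i <;> fin_cases j <;>
      simp [Matrix.diagonal_apply, Matrix.one_apply] <;>
      linear_combination hP1
  have hh2i : h2⁻¹ = Matrix.diagonal ![w2, z2] := by
    apply Matrix.inv_eq_right_inv
    rw [hH2, Matrix.diagonal_mul_diagonal]
    ext i j
    fin_cases i <;> fin_cases j <;>
      simp [Matrix.diagonal_apply, Matrix.one_apply] <;>
      linear_combination hP2
  have dg2 : IsUnit g2.det := by
    rw [(Matrix.mem_specialUnitaryGroup_iff.mp hg2).2]; exact isUnit_one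
  have dh2 : IsUnit h2.det := by
    rw [(Matrix.mem_specialUnitaryGroup_iff.mp hh2).2]; exact isUnit_one
  have hC : g1 * h1 * g1⁻¹ * h1⁻¹ = h2 * (g2 * (h2⁻¹ * g2⁻¹)) := by
    rw [← Matrix.inv_eq_left_inv hrel, Matrix.mul_inv_rev, Matrix.mul_inv_rev,
      Matrix.mul_inv_rev, Matrix.nonsing_inv_nonsing_inv _ dg2,
      Matrix.nonsing_inv_nonsing_inv _ dh2]
  rw [hg1i, hh1i, hg2i, hh2i, hG1, hG2, hH1, hH2] at hC
  have E1 := congrFun (congrFun hC 0) 0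
  have E2 := congrFun (congrFun hC 1) 1
  simp [Matrix.mul_apply, Fin.sum_univ_two, Matrix.diagonal_apply, Matrix.vecMul, dotProduct] at E1 E2
  set c := starRingEnd ℂ with hcdef
  have F1 : (b1*c b1)*(w1^2-1) = (b2*c b2)*(z2^2-1) := by
    linear_combination E1 - (a1*c a1)*hP1 + (a2*c a2)*hP2 - hN1 + hN2
  have F2 : (b1*c b1)*(z1^2-1) = (b2*c b2)*(w2^2-1) := by
    linear_combination E2 - (a1*c a1)*hP1 + (a2*c a2)*hP2 - hN1 + hN2
  have G1 : (b1*c b1)*(1-z1^2) = (b2*c b2)*z1^2*(z2^2-1) := by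
    linear_combination z1^2*F1 - ((b1*c b1)*(z1*w1+1))*hP1
  have G2 : (b1*c b1)*z2^2*(z1^2-1) = (b2*c b2)*(1-z2^2) := by
    linear_combination z2^2*F2 + ((b2*c b2)*(z2*w2+1))*hP2
  have key1 : ((b1*c b1)*(z1^2-1))*(z1^2*z2^2-1) = 0 := by
    linear_combination z1^2*G2 + G1
  have hw12 : z1*z2*(w1*w2) = 1 := by linear_combination (z2*w2)*hP1 + hP2
  have diagone : ∀ u v : ℂ, u = 1 → v = 1 → Matrix.diagonal ![u, v] = (1 : M2) := by
    intro u v hu hv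
    ext i j
    fin_cases i <;> fin_cases j <;> simp [Matrix.diagonal_apply, Matrix.one_apply, hu, hv]
  have diagnegone : ∀ u v : ℂ, u = -1 → v = -1 → Matrix.diagonal ![u, v] = (-1 : M2) := by
    intro u v hu hv
    ext i j
    fin_cases i <;> fin_cases j <;>
      simp [Matrix.diagonal_apply, Matrix.one_apply, Matrix.neg_apply, hu, hv]
  rcases mul_eq_zero.mp key1 with h | hw
  · rcases mul_eq_zero.mp h with hR1 | hu
    · -- b1 = 0
      have hb1 : b1 = 0 := by
        rw [hcdef, Complex.mul_conj] at hR1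
        exact Complex.normSq_eq_zero.mp (by exact_mod_cast hR1)
      have key2 : (b2*c b2)*(1-z2^2) = 0 := by
        linear_combination -G2 + (z2^2*(z1^2-1)*(c b1))*hb1
      rcases mul_eq_zero.mp key2 with hR2 | hv
      · have hb2 : b2 = 0 := by
          rw [hcdef, Complex.mul_conj] at hR2
          exact Complex.normSq_eq_zero.mp (by exact_mod_cast hR2)
        exfalso
        apply hirr
        have comm : ∀ p q r s : ℂ, !![p,(0:ℂ);0,q] * !![r,0;0,s] = !![r,0;0,s] * !![p,0;0,q] := by
          intro p q r s
          ext i j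
          fin_cases i <;> fin_cases j <;> simp [Matrix.mul_apply, Fin.sum_univ_two] <;> ring
        have eg1 : g1 = !![a1,0;0,c a1] := by rw [hG1, hb1]; norm_num
        have eg2 : g2 = !![a2,0;0,c a2] := by rw [hG2, hb2]; norm_num
        have eh1 : h1 = !![z1,0;0,w1] := by
          rw [hH1]; ext i j; fin_cases i <;> fin_cases j <;> simp [Matrix.diagonal_apply]
        have eh2 : h2 = !![z2,0;0,w2] := by
          rw [hH2]; ext i j; fin_cases i <;> fin_cases j <;> simp [Matrix.diagonal_apply]
        rw [eg1, eg2, eh1, eh2]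
        exact ⟨comm _ _ _ _, comm _ _ _ _, comm _ _ _ _, comm _ _ _ _, comm _ _ _ _, comm _ _ _ _⟩
      · -- z2^2 = 1
        have : (z2-1)*(z2+1) = 0 := by linear_combination -hv
        rcases mul_eq_zero.mp this with h2' | h2'
        · have hz : z2 = 1 := by linear_combination h2'
          have hw' : w2 = 1 := by linear_combination hP2 - w2*hz
          exact Or.inr (Or.inr (Or.inl (hH2 ▸ diagone _ _ hz hw')))
        · have hz : z2 = -1 := by linear_combination h2'
          have hw' : w2 = -1 := by linear_combination -hP2 + w2*hz
          exact Or.inr (Or.inr (Or.inr (Or.inl (hH2 ▸ diagnegone _ _ hz hw'))))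
    · -- z1^2 = 1
      have : (z1-1)*(z1+1) = 0 := by linear_combination hu
      rcases mul_eq_zero.mp this with h1' | h1'
      · have hz : z1 = 1 := by linear_combination h1'
        have hw' : w1 = 1 := by linear_combination hP1 - w1*hz
        exact Or.inl (hH1 ▸ diagone _ _ hz hw')
      · have hz : z1 = -1 := by linear_combination h1'
        have hw' : w1 = -1 := by linear_combination -hP1 + w1*hz
        exact Or.inr (Or.inl (hH1 ▸ diagnegone _ _ hz hw'))
  · -- (z1*z2)^2 = 1
    have : (z1*z2-1)*(z1*z2+1) = 0 := by linear_combination hw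
    have hmul : h1 * h2 = Matrix.diagonal ![z1*z2, w1*w2] := by
      rw [hH1, hH2, Matrix.diagonal_mul_diagonal]
      ext i j
      fin_cases i <;> fin_cases j <;> simp [Matrix.diagonal_apply]
    rcases mul_eq_zero.mp this with he | he
    · have hz : z1*z2 = 1 := by linear_combination he
      have hw' : w1*w2 = 1 := by linear_combination hw12 - (w1*w2)*hz
      exact Or.inr (Or.inr (Or.inr (Or.inr (Or.inl (hmul ▸ diagone _ _ hz hw')))))
    · have hz : z1*z2 = -1 := by linear_combination he
      have hw' : w1*w2 = -1 := by linear_combination -hw12 + (w1*w2)*hz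
      exact Or.inr (Or.inr (Or.inr (Or.inr (Or.inr (hmul ▸ diagnegone _ _ hz hw')))))
end
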